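/- Fix α ∈ ℝ. The map (x, y) ↦ (x̄, ȳ) (coordinatewise complex conjugation) is an isometric ℂ-antilinear bijection from Z₂(α) to Z₂(−α); consequently the complex conjugate Banach space of Z₂(α) is isometrically isomorphic (ℂ-linearly) to Z₂(−α). -/

import Mathlib

open Complex

noncomputable def l2norm (x : ℕ → ℂ) : ℝ :=
  Real.sqrt (∑' n, ‖x n‖ ^ 2)

noncomputable def OmegaA (α : ℝ) (x : ℕ → ℂ) : ℕ → ℂ :=
  fun n => if x n = 0 then 0 else
    x n * ((Real.log (l2norm x / ‖x n‖) : ℂ) ^ ((1 : ℂ) + α * I))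

/-- The quasi-norm `‖(x,y)‖_α = ‖x‖₂ + ‖y − Ω_α(x)‖₂` of `Z₂(α)`. -/
noncomputable def Qnorm (α : ℝ) (x y : ℕ → ℂ) : ℝ :=
  l2norm x + l2norm (fun n => y n - OmegaA α x n)

lemma l2norm_conj (x : ℕ → ℂ) : l2norm (fun n => starRingEnd ℂ (x n)) = l2norm x := by
  simp [l2norm]

lemma log_nonneg_aux (x : ℕ → ℂ) (n : ℕ) (hn : x n ≠ 0) :
    0 ≤ Real.log (l2norm x / ‖x n‖) := by
  by_cases hs : Summable (fun n => ‖x n‖ ^ 2)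
  · have h1 : ‖x n‖ ^ 2 ≤ ∑' m, ‖x m‖ ^ 2 := by
      exact Summable.le_tsum hs n (fun m _ => by positivity)
    have h2 : ‖x n‖ ≤ l2norm x := by
      have := Real.sqrt_le_sqrt h1
      rwa [Real.sqrt_sq (norm_nonneg _)] at this
    apply Real.log_nonneg
    rw [le_div_iff₀ (by simpa using hn)]
    simpa using h2
  · have : l2norm x = 0 := by simp [l2norm, tsum_eq_zero_of_not_summable hs]
    simp [this]

lemma omega_conj (α : ℝ) (x : ℕ → ℂ) (n : ℕ) :
    OmegaA (-α) (fun m => starRingEnd ℂ (x m)) n = starRingEnd ℂ (OmegaA α x n) := by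
  simp only [OmegaA, l2norm_conj, map_eq_zero, Complex.norm_conj]
  by_cases hn : x n = 0
  · simp [hn]
  · rw [if_neg hn, if_neg hn, map_mul]
    congr 1
    set L : ℝ := Real.log (l2norm x / ‖x n‖)
    have hL : 0 ≤ L := log_nonneg_aux x n hn
    have harg : (L : ℂ).arg ≠ Real.pi := by
      rw [Complex.arg_ofReal_of_nonneg hL]
      exact fun h => Real.pi_ne_zero h.symm
    have := Complex.conj_cpow (L : ℂ) ((1 : ℂ) + (-α : ℂ) * I) harg
    rw [Complex.conj_ofReal] at this
    rw [Complex.ofReal_neg, this]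
    congr 1
    simp [Complex.ext_iff]

/-- Coordinatewise conjugation is an isometric antilinear bijection
from `Z₂(α)` onto `Z₂(−α)`. -/
theorem stmt15 (α : ℝ) :
    ∃ e : ((ℕ → ℂ) × (ℕ → ℂ)) ≃ ((ℕ → ℂ) × (ℕ → ℂ)),
      (∀ p : (ℕ → ℂ) × (ℕ → ℂ),
        e p = (fun n => starRingEnd ℂ (p.1 n), fun n => starRingEnd ℂ (p.2 n))) ∧
      (∀ p : (ℕ → ℂ) × (ℕ → ℂ), Qnorm (-α) (e p).1 (e p).2 = Qnorm α p.1 p.2) ∧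
      (∀ (c : ℂ) (p : (ℕ → ℂ) × (ℕ → ℂ)), e (c • p) = starRingEnd ℂ c • e p) ∧
      (∀ p q : (ℕ → ℂ) × (ℕ → ℂ), e (p + q) = e p + e q) := by
  refine ⟨⟨fun p => (fun n => starRingEnd ℂ (p.1 n), fun n => starRingEnd ℂ (p.2 n)),
      fun p => (fun n => starRingEnd ℂ (p.1 n), fun n => starRingEnd ℂ (p.2 n)),
      fun p => by simp, fun p => by simp⟩, fun p => rfl, ?_, ?_, ?_⟩
  · intro p
    simp only [Equiv.coe_fn_mk, Qnorm]
    rw [l2norm_conj]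
    congr 1
    have : (fun n => starRingEnd ℂ (p.2 n) - OmegaA (-α) (fun m => starRingEnd ℂ (p.1 m)) n)
        = fun n => starRingEnd ℂ (p.2 n - OmegaA α p.1 n) := by
      funext n
      rw [omega_conj, ← map_sub]
    rw [this]
    exact l2norm_conj _
  · intro c p
    ext n <;> simp [Prod.smul_def, mul_comm]
  · intro p q
    ext n <;> simp
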